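/- When all component variances are equal, σ_1 = … = σ_m = σ_0, and the means satisfy μ_1 < … < μ_m, the correlation curve of the exchangeable bivariate Gaussian mixture satisfies lim_{y→−∞} ρ(y) = ρ_1 √((1+γ)/(1+γρ_1²)) and lim_{y→+∞} ρ(y) = ρ_m √((1+γ)/(1+γρ_m²)), where γ = σ_μ²/σ_0² and σ_μ² = Σ_k p_k(μ_k − μ)². -/

import Mathlib

open scoped Real BigOperators
open Filter

/-- Univariate Gaussian density. -/
noncomputable def phi1 (μ σ y : ℝ) : ℝ :=
  (Real.sqrt (2 * Real.pi * σ ^ 2))⁻¹ * Real.exp (-(y - μ) ^ 2 / (2 * σ ^ 2))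

/-- Posterior component probability given Y₂ = y. -/
noncomputable def pstar (m : ℕ) (p μ σ : Fin m → ℝ) (k : Fin m) (y : ℝ) : ℝ :=
  p k * phi1 (μ k) (σ k) y / ∑ j, p j * phi1 (μ j) (σ j) y

/-- Componentwise conditional mean line. -/
noncomputable def muk (m : ℕ) (μ ρ : Fin m → ℝ) (k : Fin m) (y : ℝ) : ℝ :=
  μ k + ρ k * (y - μ k)

/-- Conditional mean of the mixture. -/
noncomputable def mucond (m : ℕ) (p μ σ ρ : Fin m → ℝ) (y : ℝ) : ℝ :=
  ∑ k, pstar m p μ σ k y * muk m μ ρ k y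

/-- Regression slope β(y) = μ'(y). -/
noncomputable def beta (m : ℕ) (p μ σ ρ : Fin m → ℝ) (y : ℝ) : ℝ :=
  ∑ k, pstar m p μ σ k y *
    (ρ k + (muk m μ ρ k y - mucond m p μ σ ρ y) * (-(y - μ k) / σ k ^ 2))

/-- Conditional variance σ²(y) of the mixture. -/
noncomputable def sig2cond (m : ℕ) (p μ σ ρ : Fin m → ℝ) (y : ℝ) : ℝ :=
  ∑ k, pstar m p μ σ k y *
    (σ k ^ 2 * (1 - ρ k ^ 2) + (muk m μ ρ k y - mucond m p μ σ ρ y) ^ 2)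

/-- The Bjerve–Doksum correlation curve of the mixture, with τ₂ equal to the
marginal standard deviation σ of the mixture. -/
noncomputable def corrCurve (m : ℕ) (p μ σ ρ : Fin m → ℝ) (y : ℝ) : ℝ :=
  let σglob := Real.sqrt (∑ k, p k * (σ k ^ 2 + (μ k - ∑ j, p j * μ j) ^ 2))
  σglob * beta m p μ σ ρ y /
    Real.sqrt ((σglob * beta m p μ σ ρ y) ^ 2 + sig2cond m p μ σ ρ y)

/-!
With equal component variances, `φ(y; μ_k, σ₀) / φ(y; μ_L, σ₀)` is the exponential of an affine
function of `y` with slope `(μ_k - μ_L) / σ₀²`. Hence, as `y → +∞` (resp. `-∞`), the posterior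
weights of all components other than the one with the largest (resp. smallest) mean `μ_L` vanish
faster than any power of `y`. The regression slope and the conditional variance are weighted sums
of terms growing at most quadratically in `y`, so they tend to `ρ_L` and `σ₀² (1 - ρ_L²)`, and the
correlation curve tends to `σ ρ_L / √(σ² ρ_L² + σ₀² (1 - ρ_L²))` with `σ² = σ₀² + σ_μ²`.
-/

open Finset Topology

lemma sum_mul_sq_sub_sum_mul_le {ι : Type*} (s : Finset ι) (w x : ι → ℝ)
    (hw : ∑ k ∈ s, w k = 1) (c : ℝ) :
    ∑ k ∈ s, w k * (x k - ∑ j ∈ s, w j * x j) ^ 2 ≤ ∑ k ∈ s, w k * (x k - c) ^ 2 := by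
  set mean := ∑ j ∈ s, w j * x j
  have hsplit : ∀ k, w k * (x k - c) ^ 2 = w k * (x k - mean) ^ 2 + 2 * (mean - c) * (w k * x k)
      - (2 * (mean - c) * mean - (mean - c) ^ 2) * w k := fun k => by ring
  have hbias :
      ∑ k ∈ s, w k * (x k - c) ^ 2 = ∑ k ∈ s, w k * (x k - mean) ^ 2 + (mean - c) ^ 2 := by
    simp only [hsplit, sum_sub_distrib, sum_add_distrib, ← mul_sum, hw]
    ring
  linarith [sq_nonneg (mean - c)]

lemma tendsto_exp_mul_add_mul_pow {l : Filter ℝ} {a : ℝ}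
    (ha : Tendsto (fun y => a * y) l atBot) (b : ℝ) (n : ℕ) :
    Tendsto (fun y => Real.exp (a * y + b) * y ^ n) l (𝓝 0) := by
  rcases l.eq_or_neBot with rfl | _
  · exact tendsto_bot
  have ha0 : a ≠ 0 := by
    rintro rfl
    simp only [zero_mul] at ha
    exact not_tendsto_const_atBot 0 l ha
  have h := ((Real.tendsto_pow_mul_exp_neg_atTop_nhds_zero n).comp
    (tendsto_neg_atBot_atTop.comp ha)).const_mul (Real.exp b / (-a) ^ n)
  rw [mul_zero] at h
  have hpow : (-a) ^ n ≠ 0 := pow_ne_zero n (neg_ne_zero.2 ha0)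
  refine h.congr fun y => ?_
  simp only [Function.comp_apply, neg_neg, Real.exp_add, neg_mul_eq_neg_mul, mul_pow]
  field_simp

section Concentration

variable {ι : Type*}

def ConcentratesRapidlyAt (w : ι → ℝ → ℝ) (L : ι) (l : Filter ℝ) : Prop :=
  ∀ k, k ≠ L → ∀ n : ℕ, Tendsto (fun y => w k y * y ^ n) l (𝓝 0)

variable {w : ι → ℝ → ℝ} {L : ι} {l : Filter ℝ}

lemma ConcentratesRapidlyAt.tendsto_weight_mul_sub_mul_affine (h : ConcentratesRapidlyAt w L l)
    {x : ι → ℝ → ℝ} {a b : ι → ℝ} (hx : ∀ k y, x k y = a k * y + b k) (k : ι) (c e : ℝ) :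
    Tendsto (fun y => w k y * ((x k y - x L y) * (c * y + e))) l (𝓝 0) := by
  by_cases hk : k = L
  · subst hk
    simpa only [sub_self, zero_mul, mul_zero] using tendsto_const_nhds
  have hsum := (((h k hk 2).const_mul ((a k - a L) * c)).add
    ((h k hk 1).const_mul ((a k - a L) * e + (b k - b L) * c))).add
    ((h k hk 0).const_mul ((b k - b L) * e))
  simp only [mul_zero, add_zero] at hsum
  refine hsum.congr fun y => ?_
  rw [hx, hx]
  ring

variable [Fintype ι] (hw0 : ∀ k y, 0 ≤ w k y) (hw1 : ∀ y, ∑ k, w k y = 1)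

include hw0 hw1 in
lemma tendsto_weight_mul_of_tendsto_zero {X : ℝ → ℝ} (hX : Tendsto X l (𝓝 0)) (k : ι) :
    Tendsto (fun y => w k y * X y) l (𝓝 0) := by
  refine squeeze_zero_norm (fun y => ?_) (tendsto_zero_iff_norm_tendsto_zero.1 hX)
  rw [norm_mul, Real.norm_of_nonneg (hw0 k y)]
  refine mul_le_of_le_one_left (norm_nonneg _) ?_
  exact hw1 y ▸ single_le_sum (fun j _ => hw0 j y) (mem_univ k)

namespace ConcentratesRapidlyAt

variable (h : ConcentratesRapidlyAt w L l)
include h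

include hw1 in
lemma tendsto_weight [DecidableEq ι] (k : ι) :
    Tendsto (w k) l (𝓝 (if k = L then 1 else 0)) := by
  have hw0' : ∀ j, j ≠ L → Tendsto (w j) l (𝓝 0) := fun j hj => by
    simpa only [pow_zero, mul_one] using h j hj 0
  split_ifs with hk
  · subst hk
    have hrest := tendsto_finsetSum (univ.erase k) fun j hj => hw0' j (ne_of_mem_erase hj)
    rw [sum_const_zero] at hrest
    have hone := (tendsto_const_nhds (x := (1 : ℝ))).sub hrest
    rw [sub_zero] at hone
    refine hone.congr fun y => ?_
    rw [← hw1 y, ← add_sum_erase _ _ (mem_univ k)]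
    ring
  · exact hw0' k hk

include hw1 in
lemma tendsto_sum_weight_mul (r : ι → ℝ) : Tendsto (fun y => ∑ k, w k y * r k) l (𝓝 (r L)) := by
  classical
  have := tendsto_finsetSum univ fun k _ => (h.tendsto_weight hw1 k).mul_const (r k)
  simpa only [ite_mul, one_mul, zero_mul, sum_ite_eq', mem_univ, if_true] using this

variable {x : ι → ℝ → ℝ} {a b : ι → ℝ} (hx : ∀ k y, x k y = a k * y + b k)
include hx

include hw1 in
lemma tendsto_mean_sub_mul_affine (c e : ℝ) :
    Tendsto (fun y => (∑ k, w k y * x k y - x L y) * (c * y + e)) l (𝓝 0) := by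
  have hsum := tendsto_finsetSum univ fun k _ => h.tendsto_weight_mul_sub_mul_affine hx k c e
  rw [sum_const_zero] at hsum
  refine hsum.congr fun y => ?_
  simp only [← mul_assoc, ← sum_mul, mul_sub, sum_sub_distrib, hw1, one_mul]

include hw0 hw1 in
lemma tendsto_sum_weight_mul_add_sub_mean_mul {c e : ι → ℝ} {z : ι → ℝ → ℝ}
    (hz : ∀ k y, z k y = c k * y + e k) (r : ι → ℝ) :
    Tendsto (fun y => ∑ k, w k y * (r k + (x k y - ∑ j, w j y * x j y) * z k y)) l
      (𝓝 (r L)) := by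
  have hmain := h.tendsto_sum_weight_mul hw1 r
  have hspread := tendsto_finsetSum univ fun k _ =>
    h.tendsto_weight_mul_sub_mul_affine hx k (c k) (e k)
  -- `x k - mean = (x k - x L) - (mean - x L)`, and `mean - x L` is small even against `y`.
  have hbias := tendsto_finsetSum univ fun k _ =>
    tendsto_weight_mul_of_tendsto_zero hw0 hw1
      (h.tendsto_mean_sub_mul_affine hw1 hx (c k) (e k)) k
  rw [sum_const_zero] at hspread hbias
  have hsum := (hmain.add hspread).sub hbias
  rw [add_zero, sub_zero] at hsum
  refine hsum.congr fun y => ?_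
  rw [← sum_add_distrib, ← sum_sub_distrib]
  refine sum_congr rfl fun k _ => ?_
  rw [hz]
  ring

include hw0 hw1 in
lemma tendsto_sum_weight_mul_add_sub_mean_sq (s : ι → ℝ) :
    Tendsto (fun y => ∑ k, w k y * (s k + (x k y - ∑ j, w j y * x j y) ^ 2)) l (𝓝 (s L)) := by
  have hspread := tendsto_finsetSum univ fun k _ =>
    h.tendsto_weight_mul_sub_mul_affine hx k (a k - a L) (b k - b L)
  rw [sum_const_zero] at hspread
  have hvar : Tendsto (fun y => ∑ k, w k y * (x k y - ∑ j, w j y * x j y) ^ 2) l (𝓝 0) := by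
    refine squeeze_zero (fun y => sum_nonneg fun k _ => mul_nonneg (hw0 k y) (sq_nonneg _))
      (fun y => ?_) hspread
    convert sum_mul_sq_sub_sum_mul_le univ (w · y) (x · y) (hw1 y) (x L y) using 3 with k
    rw [hx k, hx L]
    ring
  simpa only [mul_add, sum_add_distrib, add_zero] using (h.tendsto_sum_weight_mul hw1 s).add hvar

end ConcentratesRapidlyAt

end Concentration

lemma phi1_nonneg (ν σ y : ℝ) : 0 ≤ phi1 ν σ y := by
  unfold phi1
  positivity

lemma phi1_pos {σ : ℝ} (hσ : σ ≠ 0) (ν y : ℝ) : 0 < phi1 ν σ y := by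
  unfold phi1
  have : 0 < 2 * π * σ ^ 2 := by positivity
  positivity

lemma phi1_eq_exp_mul_phi1 {σ : ℝ} (hσ : σ ≠ 0) (ν ν' y : ℝ) :
    phi1 ν σ y = Real.exp ((ν - ν') / σ ^ 2 * y + (ν' ^ 2 - ν ^ 2) / (2 * σ ^ 2)) * phi1 ν' σ y := by
  unfold phi1
  rw [mul_left_comm, ← Real.exp_add]
  congr 2
  field_simp
  ring

section Posterior

variable {m : ℕ} {p μ σ : Fin (m + 1) → ℝ} (hp : ∀ k, 0 < p k)
include hp

lemma pstar_nonneg (k : Fin (m + 1)) (y : ℝ) : 0 ≤ pstar (m + 1) p μ σ k y := by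
  unfold pstar
  exact div_nonneg (mul_nonneg (hp k).le (phi1_nonneg _ _ y))
    (sum_nonneg fun j _ => mul_nonneg (hp j).le (phi1_nonneg _ _ y))

lemma sum_pstar (hσ : ∀ k, σ k ≠ 0) (y : ℝ) : ∑ k, pstar (m + 1) p μ σ k y = 1 := by
  unfold pstar
  rw [← sum_div, div_self]
  exact (sum_pos (fun j _ => mul_pos (hp j) (phi1_pos (hσ j) _ y)) univ_nonempty).ne'

lemma pstar_le_div {L : Fin (m + 1)} (hσ : σ L ≠ 0) (k : Fin (m + 1)) (y : ℝ) :
    pstar (m + 1) p μ σ k y ≤ p k * phi1 (μ k) (σ k) y / (p L * phi1 (μ L) (σ L) y) := by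
  unfold pstar
  refine div_le_div_of_nonneg_left (mul_nonneg (hp k).le (phi1_nonneg _ _ y))
    (mul_pos (hp L) (phi1_pos hσ _ y)) ?_
  exact single_le_sum (f := fun j => p j * phi1 (μ j) (σ j) y)
    (fun j _ => mul_nonneg (hp j).le (phi1_nonneg _ _ y)) (mem_univ L)

lemma concentratesRapidlyAt_pstar {σ0 : ℝ} (hσ0 : σ0 ≠ 0) {l : Filter ℝ} {L : Fin (m + 1)}
    (hL : ∀ k, k ≠ L → Tendsto (fun y => (μ k - μ L) * y) l atBot) :
    ConcentratesRapidlyAt (pstar (m + 1) p μ fun _ => σ0) L l := by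
  intro k hk n
  set a := (μ k - μ L) / σ0 ^ 2
  set b := (μ L ^ 2 - μ k ^ 2) / (2 * σ0 ^ 2)
  have ha : Tendsto (fun y => a * y) l atBot := by
    refine ((hL k hk).atBot_div_const (by positivity : 0 < σ0 ^ 2)).congr fun y => ?_
    ring
  have hbound := ((tendsto_exp_mul_add_mul_pow ha b n).norm.const_mul (p k / p L))
  rw [norm_zero, mul_zero] at hbound
  refine squeeze_zero_norm (fun y => ?_) hbound
  have hle := pstar_le_div (μ := μ) (σ := fun _ => σ0) (L := L) hp hσ0 k y
  rw [phi1_eq_exp_mul_phi1 hσ0 (μ k) (μ L) y] at hle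
  rw [norm_mul, norm_mul, Real.norm_of_nonneg (pstar_nonneg hp k y),
    Real.norm_of_nonneg (Real.exp_pos _).le, ← mul_assoc]
  refine mul_le_mul_of_nonneg_right (hle.trans_eq ?_) (norm_nonneg _)
  rw [← mul_assoc, mul_div_mul_right _ _ (phi1_pos hσ0 (μ L) y).ne', mul_div_right_comm]

variable {σ0 : ℝ} (hσ0 : σ0 ≠ 0) {ρ : Fin (m + 1) → ℝ} {l : Filter ℝ} {L : Fin (m + 1)}
  (hL : ∀ k, k ≠ L → Tendsto (fun y => (μ k - μ L) * y) l atBot)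
include hσ0 hL

lemma tendsto_beta_of_dominant : Tendsto (beta (m + 1) p μ (fun _ => σ0) ρ) l (𝓝 (ρ L)) :=
  (concentratesRapidlyAt_pstar hp hσ0 hL).tendsto_sum_weight_mul_add_sub_mean_mul
    (pstar_nonneg hp) (sum_pstar hp fun _ => hσ0) (a := ρ) (b := fun k => μ k - ρ k * μ k)
    (fun k y => by simp only [muk]; ring) (c := fun _ => -1 / σ0 ^ 2) (e := fun k => μ k / σ0 ^ 2)
    (fun k y => by ring) ρ

lemma tendsto_sig2cond_of_dominant :
    Tendsto (sig2cond (m + 1) p μ (fun _ => σ0) ρ) l (𝓝 (σ0 ^ 2 * (1 - ρ L ^ 2))) :=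
  (concentratesRapidlyAt_pstar hp hσ0 hL).tendsto_sum_weight_mul_add_sub_mean_sq
    (pstar_nonneg hp) (sum_pstar hp fun _ => hσ0) (a := ρ) (b := fun k => μ k - ρ k * μ k)
    (fun k y => by simp only [muk]; ring) fun k => σ0 ^ 2 * (1 - ρ k ^ 2)

end Posterior

lemma sqrt_add_mul_div_sqrt_eq {s V : ℝ} (hs : s ≠ 0) (hV : 0 ≤ V) (r : ℝ) :
    √(s ^ 2 + V) * r / √((√(s ^ 2 + V) * r) ^ 2 + s ^ 2 * (1 - r ^ 2))
      = r * √((1 + V / s ^ 2) / (1 + V / s ^ 2 * r ^ 2)) := by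
  have hs2 : 0 < s ^ 2 := by positivity
  have hnum : 1 + V / s ^ 2 = (s ^ 2 + V) / s ^ 2 := by field_simp
  have hden : 1 + V / s ^ 2 * r ^ 2 = (s ^ 2 + V * r ^ 2) / s ^ 2 := by field_simp
  rw [mul_pow, Real.sq_sqrt (by positivity), hnum, hden, div_div_div_cancel_right₀ hs2.ne',
    Real.sqrt_div' _ (by positivity),
    show (s ^ 2 + V) * r ^ 2 + s ^ 2 * (1 - r ^ 2) = s ^ 2 + V * r ^ 2 by ring]
  field_simp

lemma tendsto_corrCurve_of_dominant {m : ℕ} {p μ ρ : Fin (m + 1) → ℝ} {σ0 : ℝ}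
    (hp : ∀ k, 0 < p k) (hpsum : ∑ k, p k = 1) (hσ0 : σ0 ≠ 0) {l : Filter ℝ} {L : Fin (m + 1)}
    (hL : ∀ k, k ≠ L → Tendsto (fun y => (μ k - μ L) * y) l atBot) :
    Tendsto (corrCurve (m + 1) p μ (fun _ => σ0) ρ) l
      (𝓝 (ρ L * √((1 + (∑ k, p k * (μ k - ∑ j, p j * μ j) ^ 2) / σ0 ^ 2) /
          (1 + (∑ k, p k * (μ k - ∑ j, p j * μ j) ^ 2) / σ0 ^ 2 * ρ L ^ 2)))) := by
  set V := ∑ k, p k * (μ k - ∑ j, p j * μ j) ^ 2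
  have hV : 0 ≤ V := sum_nonneg fun k _ => mul_nonneg (hp k).le (sq_nonneg _)
  have hσ : ∑ k, p k * ((fun _ => σ0) k ^ 2 + (μ k - ∑ j, p j * μ j) ^ 2) = σ0 ^ 2 + V := by
    simp only [mul_add, sum_add_distrib, ← sum_mul, hpsum, one_mul]
    rfl
  have hslope := (tendsto_beta_of_dominant hp hσ0 (ρ := ρ) hL).const_mul √(σ0 ^ 2 + V)
  have hden := ((hslope.pow 2).add (tendsto_sig2cond_of_dominant hp hσ0 (ρ := ρ) hL)).sqrt
  have hden0 : √((√(σ0 ^ 2 + V) * ρ L) ^ 2 + σ0 ^ 2 * (1 - ρ L ^ 2)) ≠ 0 := by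
    refine (Real.sqrt_pos.2 ?_).ne'
    rw [mul_pow, Real.sq_sqrt (by positivity),
      show (σ0 ^ 2 + V) * ρ L ^ 2 + σ0 ^ 2 * (1 - ρ L ^ 2) = σ0 ^ 2 + V * ρ L ^ 2 by ring]
    positivity
  have hlim := hslope.div hden hden0
  rw [sqrt_add_mul_div_sqrt_eq hσ0 hV] at hlim
  refine hlim.congr fun y => ?_
  simp only [corrCurve, hσ, Pi.div_apply]

theorem correlation_curve_limits_equal_variances_general
    (m : ℕ) (p μ ρ : Fin (m + 1) → ℝ) (σ0 : ℝ)
    (hp : ∀ k, 0 < p k) (hpsum : ∑ k, p k = 1) (hσ0 : 0 < σ0)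
    (hμ : StrictMono μ) :
    Tendsto (corrCurve (m + 1) p μ (fun _ => σ0) ρ) atBot
      (nhds (ρ 0 * Real.sqrt
        ((1 + (∑ k, p k * (μ k - ∑ j, p j * μ j) ^ 2) / σ0 ^ 2) /
          (1 + (∑ k, p k * (μ k - ∑ j, p j * μ j) ^ 2) / σ0 ^ 2 * ρ 0 ^ 2)))) ∧
    Tendsto (corrCurve (m + 1) p μ (fun _ => σ0) ρ) atTop
      (nhds (ρ (Fin.last m) * Real.sqrt
        ((1 + (∑ k, p k * (μ k - ∑ j, p j * μ j) ^ 2) / σ0 ^ 2) /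
          (1 + (∑ k, p k * (μ k - ∑ j, p j * μ j) ^ 2) / σ0 ^ 2 *
            ρ (Fin.last m) ^ 2)))) :=
  ⟨tendsto_corrCurve_of_dominant hp hpsum hσ0.ne' fun _ hk =>
      tendsto_id.const_mul_atBot (sub_pos.2 (hμ (Fin.pos_of_ne_zero hk))),
    tendsto_corrCurve_of_dominant hp hpsum hσ0.ne' fun _ hk =>
      tendsto_id.const_mul_atTop_of_neg (sub_neg.2 (hμ (Fin.lt_last_iff_ne_last.2 hk)))⟩

/-- Equal component variances σ₀ and strictly increasing means: the correlation curve
tends to ρ₁√((1+γ)/(1+γρ₁²)) at -∞ and to ρ_m√((1+γ)/(1+γρ_m²)) at +∞,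
where γ = σ_μ²/σ₀² and σ_μ² = Σ_k p_k (μ_k − μ)². -/
theorem correlation_curve_limits_equal_variances
    (m : ℕ) (p μ ρ : Fin (m + 1) → ℝ) (σ0 : ℝ)
    (hp : ∀ k, 0 < p k) (hpsum : ∑ k, p k = 1) (hσ0 : 0 < σ0)
    (hρ : ∀ k, ρ k ∈ Set.Ioo (-1 : ℝ) 1)
    (hμ : StrictMono μ) :
    Tendsto (corrCurve (m + 1) p μ (fun _ => σ0) ρ) atBot
      (nhds (ρ 0 * Real.sqrt
        ((1 + (∑ k, p k * (μ k - ∑ j, p j * μ j) ^ 2) / σ0 ^ 2) /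
          (1 + (∑ k, p k * (μ k - ∑ j, p j * μ j) ^ 2) / σ0 ^ 2 * ρ 0 ^ 2)))) ∧
    Tendsto (corrCurve (m + 1) p μ (fun _ => σ0) ρ) atTop
      (nhds (ρ (Fin.last m) * Real.sqrt
        ((1 + (∑ k, p k * (μ k - ∑ j, p j * μ j) ^ 2) / σ0 ^ 2) /
          (1 + (∑ k, p k * (μ k - ∑ j, p j * μ j) ^ 2) / σ0 ^ 2 *
            ρ (Fin.last m) ^ 2)))) :=
  correlation_curve_limits_equal_variances_general m p μ ρ σ0 hp hpsum hσ0 hμ
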